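/- Let p be a μ-strongly log-concave probability density on ℝ^n with finite second moment, mode x* and mean m. If (sup_x p(x))·(2π/μ)^{n/2} ≤ 1, then the Wasserstein-2 distance between the point mass δ_{x*} and p satisfies W₂(δ_{x*}, p)² = ∫ ‖x − x*‖² p(x) dx ≤ 2n/μ. -/

import Mathlib

open MeasureTheory Set Real

/-- A probability density `p` on `ℝⁿ` is `μc`-strongly log-concave if `-log p` is twice
continuously differentiable and `μc`-strongly convex. -/
def StronglyLogConcave {n : ℕ} (μc : ℝ) (p : EuclideanSpace ℝ (Fin n) → ℝ) : Prop :=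
  ContDiff ℝ 2 (fun x => -Real.log (p x)) ∧
    StrongConvexOn Set.univ μc (fun x => -Real.log (p x))

/-- The squared Wasserstein-2 distance between two measures: the infimum over all couplings
(probability measures on the product with the given marginals) of the expected squared
distance. -/
noncomputable def W2sq {E : Type*} [NormedAddCommGroup E] [MeasurableSpace E]
    (μ ν : Measure E) : ℝ :=
  sInf {c : ℝ | ∃ pl : Measure (E × E), IsProbabilityMeasure pl ∧
    pl.map Prod.fst = μ ∧ pl.map Prod.snd = ν ∧ c = ∫ q, ‖q.1 - q.2‖ ^ 2 ∂pl}

/-- The Wasserstein-2 distance. -/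
noncomputable def W2 {E : Type*} [NormedAddCommGroup E] [MeasurableSpace E]
    (μ ν : Measure E) : ℝ :=
  Real.sqrt (W2sq μ ν)

/-! Strong convexity of `-log p` forces quadratic growth away from its minimiser, the mode `xs`,
so `p` lies below the Gaussian envelope `p xs · exp (-μ‖x - xs‖² / 2)`. Integrating `‖x - xs‖²`
against that envelope gives `p xs · (n / μ) (2π / μ)^(n/2)`, which is at most `n / μ` because
`sup p = p xs`; the Gaussian second moment comes from polar coordinates and
`Γ(s + 1) = s Γ(s)`. The Wasserstein identity holds because the only coupling of a point mass with a
probability measure is their product. -/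

open Filter Topology Module

theorem integral_Ioi_pow_add_two_mul_exp_neg_mul_sq {b : ℝ} (hb : 0 < b) (k : ℕ) :
    ∫ y in Ioi (0 : ℝ), y ^ (k + 2) * exp (-b * y ^ 2) =
      (k + 1) / (2 * b) * ∫ y in Ioi (0 : ℝ), y ^ k * exp (-b * y ^ 2) := by
  have hk : -1 < (k : ℝ) := neg_one_lt_zero.trans_le k.cast_nonneg
  have h := integral_rpow_mul_exp_neg_mul_rpow two_pos (by linarith : -1 < (k : ℝ) + 2) hb
  have h' := integral_rpow_mul_exp_neg_mul_rpow two_pos hk hb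
  simp only [rpow_two, rpow_natCast] at h h'
  have hcast : ∀ y : ℝ, y ^ (k + 2) = y ^ ((k : ℝ) + 2) := fun y => by
    rw [← rpow_natCast]; push_cast; rfl
  have hΓ : Gamma (((k : ℝ) + 2 + 1) / 2) = (k + 1) / 2 * Gamma (((k : ℝ) + 1) / 2) := by
    rw [show ((k : ℝ) + 2 + 1) / 2 = (k + 1) / 2 + 1 by ring, Gamma_add_one (by positivity)]
  have hpow : b ^ (-((k : ℝ) + 2 + 1) / 2) = b ^ (-((k : ℝ) + 1) / 2) * b⁻¹ := by
    rw [← rpow_neg_one, ← rpow_add hb]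
    ring_nf
  simp_rw [hcast]
  rw [h, h', hΓ, hpow]
  field_simp

section GaussianMoment

variable {E : Type*} [NormedAddCommGroup E] [NormedSpace ℝ E] [FiniteDimensional ℝ E]
  [MeasurableSpace E] [BorelSpace E] (μ : Measure E) [μ.IsAddHaarMeasure] {b : ℝ}

theorem integrable_sq_norm_mul_exp_neg_mul_sq_norm (hb : 0 < b) :
    Integrable (fun v => ‖v‖ ^ 2 * exp (-b * ‖v‖ ^ 2)) μ := by
  rcases subsingleton_or_nontrivial E with hE | hE
  · simp [Subsingleton.elim _ (0 : E)]
  rw [integrable_fun_norm_addHaar μ (f := fun y => y ^ 2 * exp (-b * y ^ 2))]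
  have := integrableOn_rpow_mul_exp_neg_mul_sq hb
    (neg_one_lt_zero.trans_le (finrank ℝ E - 1 + 2).cast_nonneg)
  refine this.congr_fun (fun y _ => ?_) measurableSet_Ioi
  simp only [rpow_natCast, smul_eq_mul, pow_add]
  ring

theorem integral_sq_norm_mul_exp_neg_mul_sq_norm (hb : 0 < b) :
    ∫ v, ‖v‖ ^ 2 * exp (-b * ‖v‖ ^ 2) ∂μ =
      finrank ℝ E / (2 * b) * ∫ v, exp (-b * ‖v‖ ^ 2) ∂μ := by
  rcases subsingleton_or_nontrivial E with hE | hE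
  · simp [Subsingleton.elim _ (0 : E), finrank_zero_of_subsingleton]
  have hd : finrank ℝ E - 1 + 1 = finrank ℝ E := Nat.sub_add_cancel finrank_pos
  rw [integral_fun_norm_addHaar μ (fun y => y ^ 2 * exp (-b * y ^ 2)),
    integral_fun_norm_addHaar μ (fun y => exp (-b * y ^ 2))]
  simp only [smul_eq_mul, nsmul_eq_mul, ← mul_assoc, ← pow_add]
  rw [integral_Ioi_pow_add_two_mul_exp_neg_mul_sq hb, ← Nat.cast_succ, Nat.succ_eq_add_one, hd]
  ring

end GaussianMoment

section Wasserstein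

variable {E : Type*} [NormedAddCommGroup E] [MeasurableSpace E] [OpensMeasurableSpace E]

theorem W2sq_dirac_left (a : E) (ν : Measure E) [IsProbabilityMeasure ν] :
    W2sq (Measure.dirac a) ν = ∫ y, ‖a - y‖ ^ 2 ∂ν := by
  have hcost : ∀ γ : Measure (E × E), γ.map Prod.fst = Measure.dirac a → γ.map Prod.snd = ν →
      ∫ q, ‖q.1 - q.2‖ ^ 2 ∂γ = ∫ y, ‖a - y‖ ^ 2 ∂ν := by
    intro γ hfst hsnd
    have hfst_ae : ∀ᵐ q ∂γ, q.1 = a := by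
      have : ∀ᵐ x ∂γ.map Prod.fst, x = a := by
        rw [hfst, ae_dirac_eq]
        exact eventually_pure.2 rfl
      exact ae_of_ae_map measurable_fst.aemeasurable this
    have hmeas : Continuous fun y => ‖a - y‖ ^ 2 := by fun_prop
    rw [← hsnd, integral_map measurable_snd.aemeasurable hmeas.aestronglyMeasurable]
    exact integral_congr_ae (hfst_ae.mono fun q hq => by simp only [hq])
  have hcouplings : {c : ℝ | ∃ γ : Measure (E × E), IsProbabilityMeasure γ ∧
      γ.map Prod.fst = Measure.dirac a ∧ γ.map Prod.snd = ν ∧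
      c = ∫ q, ‖q.1 - q.2‖ ^ 2 ∂γ} = {∫ y, ‖a - y‖ ^ 2 ∂ν} := by
    ext c
    constructor
    · rintro ⟨γ, -, hfst, hsnd, rfl⟩
      exact hcost γ hfst hsnd
    · rintro rfl
      have hfst : ((Measure.dirac a).prod ν).map Prod.fst = Measure.dirac a := by simp
      have hsnd : ((Measure.dirac a).prod ν).map Prod.snd = ν := by simp
      exact ⟨_, inferInstance, hfst, hsnd, (hcost _ hfst hsnd).symm⟩
  rw [W2sq, hcouplings, csInf_singleton]

theorem W2_dirac_left_sq (a : E) (ν : Measure E) [IsProbabilityMeasure ν] :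
    W2 (Measure.dirac a) ν ^ 2 = ∫ y, ‖a - y‖ ^ 2 ∂ν := by
  rw [W2, W2sq_dirac_left, sq_sqrt (integral_nonneg fun y => by positivity)]

end Wasserstein

section WithDensity

variable {α : Type*} [MeasurableSpace α] {μ : Measure α} {p : α → ℝ}

theorem isProbabilityMeasure_withDensity_ofReal (hp : 0 ≤ᵐ[μ] p) (hint : ∫ x, p x ∂μ = 1) :
    IsProbabilityMeasure (μ.withDensity fun x => ENNReal.ofReal (p x)) := by
  have hpi : Integrable p μ := .of_integral_ne_zero (by rw [hint]; exact one_ne_zero)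
  constructor
  rw [withDensity_apply _ MeasurableSet.univ, setLIntegral_univ,
    ← ofReal_integral_eq_lintegral_ofReal hpi hp, hint, ENNReal.ofReal_one]

theorem integral_withDensity_ofReal (hp : 0 ≤ᵐ[μ] p) (hpm : AEMeasurable p μ) (g : α → ℝ) :
    ∫ x, g x ∂(μ.withDensity fun x => ENNReal.ofReal (p x)) = ∫ x, p x * g x ∂μ := by
  rw [integral_withDensity_eq_integral_toReal_smul₀ hpm.ennreal_ofReal
    (ae_of_all _ fun _ => ENNReal.ofReal_lt_top)]
  refine integral_congr_ae (hp.mono fun x hx => ?_)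
  simp [ENNReal.toReal_ofReal hx]

end WithDensity

section LogConcave

variable {E : Type*} [NormedAddCommGroup E] [NormedSpace ℝ E]

theorem StrongConvexOn.add_sq_norm_sub_le_of_isMinOn {s : Set E} {m : ℝ} {f : E → ℝ} {a x : E}
    (hf : StrongConvexOn s m f) (hmin : IsMinOn f s a) (ha : a ∈ s) (hx : x ∈ s) :
    f a + m / 2 * ‖x - a‖ ^ 2 ≤ f x := by
  have hsegment : ∀ t ∈ Ioo (0 : ℝ) 1, f a + (1 - t) * (m / 2 * ‖x - a‖ ^ 2) ≤ f x := by
    intro t ⟨ht₀, ht₁⟩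
    have hconv := hf.2 hx ha ht₀.le (sub_nonneg.2 ht₁.le) (add_sub_cancel t 1)
    have hle := hmin (hf.1 hx ha ht₀.le (sub_nonneg.2 ht₁.le) (add_sub_cancel t 1))
    simp only [smul_eq_mul, mem_ofPred_eq] at hconv hle
    refine le_of_mul_le_mul_left ?_ ht₀
    linarith
  have hlim : Tendsto (fun t : ℝ => f a + (1 - t) * (m / 2 * ‖x - a‖ ^ 2)) (𝓝[>] 0)
      (𝓝 (f a + (1 - 0) * (m / 2 * ‖x - a‖ ^ 2))) :=
    (Continuous.tendsto (by fun_prop) 0).mono_left nhdsWithin_le_nhds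
  have := le_of_tendsto hlim (mem_of_superset (Ioo_mem_nhdsGT one_pos) hsegment)
  rwa [sub_zero, one_mul] at this

theorem isLocalMin_neg_log_of_forall_le {X : Type*} [TopologicalSpace X] {p : X → ℝ} {a : X}
    (hp : ∀ x, 0 ≤ p x) (hmode : ∀ x, p x ≤ p a) (hcont : ContinuousAt (fun x => -log (p x)) a) :
    IsLocalMin (fun x => -log (p x)) a := by
  -- `-log p` also vanishes where `p` does (`log 0 = 0`), so when `p a < 1` the mode minimises it
  -- only near `a`, where continuity keeps `-log p` positive.
  have hle : ∀ x, -log (p x) ≠ 0 → -log (p a) ≤ -log (p x) := fun x hx =>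
    have hpx : 0 < p x := (hp x).lt_of_ne fun h => hx (by rw [← h, log_zero, neg_zero])
    neg_le_neg (log_le_log hpx (hmode x))
  rcases le_or_gt (-log (p a)) 0 with ha | ha
  · refine Eventually.of_forall fun x => ?_
    rcases eq_or_ne (-log (p x)) 0 with hx | hx
    · exact ha.trans hx.ge
    · exact hle x hx
  · filter_upwards [hcont.eventually (lt_mem_nhds ha)] with x hx using hle x hx.ne'

theorem le_mul_exp_of_strongConvexOn_neg_log {m : ℝ} (hm : 0 ≤ m) {p : E → ℝ} {a : E}
    (hp : ∀ x, 0 ≤ p x) (hmode : ∀ x, p x ≤ p a) (hcont : ContinuousAt (fun x => -log (p x)) a)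
    (hconv : StrongConvexOn univ m fun x => -log (p x)) (x : E) :
    p x ≤ p a * exp (-(m / 2) * ‖x - a‖ ^ 2) := by
  rcases (hp x).eq_or_lt with hx | hx
  · rw [← hx]
    exact mul_nonneg (hp a) (exp_pos _).le
  have hmin : IsMinOn (fun x => -log (p x)) univ a :=
    fun y _ => IsMinOn.of_isLocalMin_of_convex_univ
      (isLocalMin_neg_log_of_forall_le hp hmode hcont) (hconv.convexOn fun r => by positivity) y
  have hgrowth := hconv.add_sq_norm_sub_le_of_isMinOn hmin (mem_univ a) (mem_univ x)
  have ha : 0 < p a := hx.trans_le (hmode x)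
  calc p x = exp (log (p x)) := (exp_log hx).symm
    _ ≤ exp (log (p a) + -(m / 2) * ‖x - a‖ ^ 2) := exp_le_exp.2 (by linarith)
    _ = p a * exp (-(m / 2) * ‖x - a‖ ^ 2) := by rw [exp_add, exp_log ha]

end LogConcave

theorem W2_dirac_mode_sq_le_of_stronglyLogConcave_general {n : ℕ} (μc : ℝ) (hμc : 0 < μc)
    (p : EuclideanSpace ℝ (Fin n) → ℝ) (hp : ∀ x, 0 ≤ p x)
    (hint : ∫ x, p x = 1)
    (hlc : StronglyLogConcave μc p)
    (xs : EuclideanSpace ℝ (Fin n)) (hmode : ∀ x, p x ≤ p xs)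
    (hsup : (⨆ x, p x) * (2 * π / μc) ^ ((n : ℝ) / 2) ≤ 1) :
    (W2 (Measure.dirac xs) (volume.withDensity (fun x => ENNReal.ofReal (p x)))) ^ 2 =
        ∫ x, ‖x - xs‖ ^ 2 * p x ∧
      ∫ x, ‖x - xs‖ ^ 2 * p x ≤ 2 * n / μc := by
  have hp_ae : 0 ≤ᵐ[volume] p := ae_of_all _ hp
  have hpm : AEMeasurable p := (Integrable.of_integral_ne_zero (by simp [hint])).aemeasurable
  have := isProbabilityMeasure_withDensity_ofReal hp_ae hint
  refine ⟨?_, ?_⟩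
  · rw [W2_dirac_left_sq, integral_withDensity_ofReal hp_ae hpm]
    simp_rw [norm_sub_rev xs, mul_comm (p _)]
  have hb : 0 < μc / 2 := half_pos hμc
  have hsup_eq : ⨆ x, p x = p xs :=
    le_antisymm (ciSup_le hmode) (le_ciSup ⟨p xs, by rintro _ ⟨x, rfl⟩; exact hmode x⟩ xs)
  have hgauss : ∫ v : EuclideanSpace ℝ (Fin n), ‖v‖ ^ 2 * exp (-(μc / 2) * ‖v‖ ^ 2) =
      n / μc * (2 * π / μc) ^ ((n : ℝ) / 2) := by
    rw [integral_sq_norm_mul_exp_neg_mul_sq_norm volume hb,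
      GaussianFourier.integral_rexp_neg_mul_sq_norm hb, finrank_euclideanSpace_fin]
    field_simp
  have henvelope := le_mul_exp_of_strongConvexOn_neg_log hμc.le hp hmode
    hlc.1.continuous.continuousAt hlc.2
  calc ∫ x, ‖x - xs‖ ^ 2 * p x
      ≤ ∫ x, p xs * (‖x - xs‖ ^ 2 * exp (-(μc / 2) * ‖x - xs‖ ^ 2)) :=
        integral_mono_of_nonneg (ae_of_all _ fun x => mul_nonneg (sq_nonneg _) (hp x))
          (((integrable_sq_norm_mul_exp_neg_mul_sq_norm volume hb).comp_sub_right xs).const_mul _)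
          (ae_of_all _ fun x =>
            (mul_le_mul_of_nonneg_left (henvelope x) (sq_nonneg _)).trans_eq (by ring))
    _ = n / μc * (p xs * (2 * π / μc) ^ ((n : ℝ) / 2)) := by
        rw [integral_const_mul, integral_sub_right_eq_self
          (fun v => ‖v‖ ^ 2 * exp (-(μc / 2) * ‖v‖ ^ 2)) xs, hgauss]
        ring
    _ ≤ n / μc := mul_le_of_le_one_right (by positivity) (hsup_eq ▸ hsup)
    _ ≤ 2 * n / μc := by gcongr; linarith

/-- For a `μc`-strongly log-concave probability density `p` on `ℝⁿ` with finite second moment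
and mode `xs`, if `(sup p)·(2π/μc)^{n/2} ≤ 1`, then
`W₂(δ_{xs}, p)² = ∫ ‖x − xs‖² p(x) dx ≤ 2n/μc`. -/
theorem W2_dirac_mode_sq_le_of_stronglyLogConcave {n : ℕ} (μc : ℝ) (hμc : 0 < μc)
    (p : EuclideanSpace ℝ (Fin n) → ℝ) (hp : ∀ x, 0 ≤ p x)
    (hint : ∫ x, p x = 1)
    (hlc : StronglyLogConcave μc p)
    (hmom : Integrable (fun x => ‖x‖ ^ 2 * p x))
    (xs : EuclideanSpace ℝ (Fin n)) (hmode : ∀ x, p x ≤ p xs)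
    (hsup : (⨆ x, p x) * (2 * π / μc) ^ ((n : ℝ) / 2) ≤ 1) :
    (W2 (Measure.dirac xs) (volume.withDensity (fun x => ENNReal.ofReal (p x)))) ^ 2 =
        ∫ x, ‖x - xs‖ ^ 2 * p x ∧
      ∫ x, ‖x - xs‖ ^ 2 * p x ≤ 2 * n / μc :=
  W2_dirac_mode_sq_le_of_stronglyLogConcave_general μc hμc p hp hint hlc xs hmode hsup
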